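/- Let ρ ∈ (0,∞). For every x ∈ (0,∞), the pair (f_ρ(x,·), g_ρ(x,·)) : ℝ → (0,∞)² is a default ρ-Brownian Boost ODE pair; conversely, every default ρ-Brownian Boost ODE pair (f,g) equals (f_ρ(x,·), g_ρ(x,·)) for the value x = g(0) ∈ (0,∞). Moreover, g_ρ(x,·) = f_ρ(x,·) · S_ρ(x,·) for every x ∈ (0,∞). -/

import Mathlib

open Real MeasureTheory Filter Set

noncomputable section

/-- `S` is the (unique) solution of the ODE
`S'(u) = -8ρ S(u)^{1+ρ}/(1+S(u)^ρ)²` with `S(0) = x`, valued in `(0,∞)`. -/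
def IsSsol (ρ x : ℝ) (S : ℝ → ℝ) : Prop :=
  (∀ u : ℝ, 0 < S u) ∧ S 0 = x ∧
    ∀ u : ℝ, HasDerivAt S (-(8 * ρ * S u ^ (1 + ρ)) / (1 + S u ^ ρ) ^ 2) u

/-- `f_ρ(x,·)`, expressed in terms of the solution `S = S_ρ(x,·)`. -/
def fRho (ρ : ℝ) (S : ℝ → ℝ) (r : ℝ) : ℝ :=
  Real.exp (2 * ∫ u in (0:ℝ)..r, (1 - 2 * (1 + (1 - ρ) * S u ^ ρ) / (1 + S u ^ ρ) ^ 2))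

/-- `g_ρ(x,·)`, expressed in terms of the solution `S = S_ρ(x,·)`. -/
def gRho (ρ x : ℝ) (S : ℝ → ℝ) (r : ℝ) : ℝ :=
  x * Real.exp (-2 * ∫ u in (0:ℝ)..r,
      (1 - 2 * ((1 - ρ) * S u ^ ρ + S u ^ (2 * ρ)) / (1 + S u ^ ρ) ^ 2))

/-- `(f,g)` is a `ρ`-Brownian Boost ODE pair. -/
def IsBBpair (ρ : ℝ) (f g : ℝ → ℝ) : Prop :=
  Differentiable ℝ f ∧ Differentiable ℝ g ∧ (∀ u : ℝ, 0 < f u) ∧ (∀ u : ℝ, 0 < g u) ∧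
    ∀ u : ℝ,
      2 * ρ * f u ^ (1 + ρ) * g u ^ ρ
          = (f u ^ (2 * ρ) - g u ^ (2 * ρ)) * f u
            + (1 / 2) * deriv f u * (f u ^ ρ + g u ^ ρ) ^ 2 ∧
      2 * ρ * f u ^ ρ * g u ^ (1 + ρ)
          = -((f u ^ (2 * ρ) - g u ^ (2 * ρ)) * g u)
            - (1 / 2) * deriv g u * (f u ^ ρ + g u ^ ρ) ^ 2

/-!
Write `A(s) = 1 - 2(1 + (1-ρ)s^ρ)/(1+s^ρ)²` and `B(s) = 1 - 2((1-ρ)s^ρ + s^{2ρ})/(1+s^ρ)²` for the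
integrands of `f_ρ` and `g_ρ`. For positive `f`, `g` the two Brownian Boost equations are linear in
`f'` and `g'`, and say exactly `f' = 2A(g/f) f` and `g' = -2B(g/f) g`. Since
`A + B = 4ρs^ρ/(1+s^ρ)²`, the quotient `s = g/f` then solves `s' = -2(A+B)(s) s`, which is the ODE
of `S_ρ`; and `f`, `g` are recovered from `s` by integrating their logarithmic derivatives, which
gives `f_ρ` and `g_ρ`.
-/

namespace BrownianBoost

def A (ρ s : ℝ) : ℝ := 1 - 2 * (1 + (1 - ρ) * s ^ ρ) / (1 + s ^ ρ) ^ 2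

def B (ρ s : ℝ) : ℝ := 1 - 2 * ((1 - ρ) * s ^ ρ + s ^ (2 * ρ)) / (1 + s ^ ρ) ^ 2

section Algebra

variable {ρ s : ℝ}

lemma rpow_two_mul_eq_sq (hs : 0 ≤ s) (ρ : ℝ) : s ^ (2 * ρ) = (s ^ ρ) ^ 2 := by
  rw [mul_comm]; exact_mod_cast Real.rpow_mul_natCast hs ρ 2

lemma A_eq (hs : 0 < s) : A ρ s = ((s ^ ρ) ^ 2 - 1 + 2 * ρ * s ^ ρ) / (1 + s ^ ρ) ^ 2 := by
  have : 0 < s ^ ρ := by positivity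
  unfold A; field_simp; ring

lemma B_eq (hs : 0 < s) : B ρ s = (1 - (s ^ ρ) ^ 2 + 2 * ρ * s ^ ρ) / (1 + s ^ ρ) ^ 2 := by
  have : 0 < s ^ ρ := by positivity
  unfold B; rw [rpow_two_mul_eq_sq hs.le]; field_simp; ring

lemma A_add_B (hs : 0 < s) : A ρ s + B ρ s = 4 * ρ * s ^ ρ / (1 + s ^ ρ) ^ 2 := by
  have : 0 < s ^ ρ := by positivity
  rw [A_eq hs, B_eq hs]; field_simp; ring

lemma ssol_rhs_eq (hs : 0 < s) :
    -(8 * ρ * s ^ (1 + ρ)) / (1 + s ^ ρ) ^ 2 = -2 * (A ρ s + B ρ s) * s := by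
  rw [A_add_B hs, Real.rpow_add hs, Real.rpow_one]; ring

lemma continuousOn_rpow_const_Ioi : ContinuousOn (fun s : ℝ => s ^ ρ) (Ioi 0) :=
  continuousOn_id.rpow_const fun _ hs => Or.inl (ne_of_gt hs)

lemma one_add_rpow_sq_ne_zero : ∀ s ∈ Ioi (0 : ℝ), (1 + s ^ ρ) ^ 2 ≠ 0 :=
  fun s hs => by have : (0 : ℝ) < s := hs; positivity

lemma continuousOn_A : ContinuousOn (A ρ) (Ioi 0) := by
  have := continuousOn_rpow_const_Ioi (ρ := ρ)
  have := one_add_rpow_sq_ne_zero (ρ := ρ)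
  unfold A
  fun_prop (disch := assumption)

lemma continuousOn_B : ContinuousOn (B ρ) (Ioi 0) := by
  have := continuousOn_rpow_const_Ioi (ρ := ρ)
  have := continuousOn_rpow_const_Ioi (ρ := 2 * ρ)
  have := one_add_rpow_sq_ne_zero (ρ := ρ)
  unfold B
  fun_prop (disch := assumption)

end Algebra

section Equations

variable {ρ a b : ℝ}

lemma bbEq_fst_iff (ha : 0 < a) (hb : 0 < b) (a' : ℝ) :
    2 * ρ * a ^ (1 + ρ) * b ^ ρ
        = (a ^ (2 * ρ) - b ^ (2 * ρ)) * a + (1 / 2) * a' * (a ^ ρ + b ^ ρ) ^ 2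
      ↔ a' = 2 * A ρ (b / a) * a := by
  have hp : 0 < a ^ ρ := by positivity
  have hq : 0 < b ^ ρ := by positivity
  have hA : 2 * A ρ (b / a) * a * (a ^ ρ + b ^ ρ) ^ 2
      = 2 * a * ((b ^ ρ) ^ 2 - (a ^ ρ) ^ 2 + 2 * ρ * a ^ ρ * b ^ ρ) := by
    rw [A_eq (div_pos hb ha), Real.div_rpow hb.le ha.le]; field_simp
  rw [← mul_left_inj' (a := a') (by positivity : (a ^ ρ + b ^ ρ) ^ 2 ≠ 0), hA,
    Real.rpow_add ha, Real.rpow_one, rpow_two_mul_eq_sq ha.le, rpow_two_mul_eq_sq hb.le]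
  constructor <;> intro h <;> linarith

lemma bbEq_snd_iff (ha : 0 < a) (hb : 0 < b) (b' : ℝ) :
    2 * ρ * a ^ ρ * b ^ (1 + ρ)
        = -((a ^ (2 * ρ) - b ^ (2 * ρ)) * b) - (1 / 2) * b' * (a ^ ρ + b ^ ρ) ^ 2
      ↔ b' = -2 * B ρ (b / a) * b := by
  have hp : 0 < a ^ ρ := by positivity
  have hq : 0 < b ^ ρ := by positivity
  have hB : -2 * B ρ (b / a) * b * (a ^ ρ + b ^ ρ) ^ 2
      = -2 * b * ((a ^ ρ) ^ 2 - (b ^ ρ) ^ 2 + 2 * ρ * a ^ ρ * b ^ ρ) := by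
    rw [B_eq (div_pos hb ha), Real.div_rpow hb.le ha.le]; field_simp
  rw [← mul_left_inj' (a := b') (by positivity : (a ^ ρ + b ^ ρ) ^ 2 ≠ 0), hB,
    Real.rpow_add hb, Real.rpow_one, rpow_two_mul_eq_sq ha.le, rpow_two_mul_eq_sq hb.le]
  constructor <;> intro h <;> linarith

lemma isBBpair_iff {f g : ℝ → ℝ} (hf : ∀ u, 0 < f u) (hg : ∀ u, 0 < g u)
    (hdf : Differentiable ℝ f) (hdg : Differentiable ℝ g) :
    IsBBpair ρ f g ↔ ∀ u, deriv f u = 2 * A ρ (g u / f u) * f u ∧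
      deriv g u = -2 * B ρ (g u / f u) * g u := by
  simp only [IsBBpair, hdf, hdg, hf, hg, bbEq_fst_iff (hf _) (hg _),
    bbEq_snd_iff (hf _) (hg _), implies_true, true_and]

end Equations

/-- The right-hand side of the ODE satisfied by `log S_ρ(x, ·)`; unlike that of `S_ρ(x, ·)`
itself it is globally Lipschitz, which gives uniqueness of `S_ρ(x, ·)`. -/
def logField (ρ y : ℝ) : ℝ := -(8 * ρ * exp (ρ * y)) / (1 + exp (ρ * y)) ^ 2

section LogField

variable (ρ : ℝ)

lemma hasDerivAt_logField (y : ℝ) :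
    HasDerivAt (logField ρ)
      (8 * ρ ^ 2 * exp (ρ * y) * (exp (ρ * y) - 1) / (1 + exp (ρ * y)) ^ 3) y := by
  have he : HasDerivAt (fun y => exp (ρ * y)) (exp (ρ * y) * ρ) y := by
    simpa using ((hasDerivAt_id y).const_mul ρ).exp
  have hden : (1 + exp (ρ * y)) ^ 2 ≠ 0 := by positivity
  have hnum : HasDerivAt (fun y => -(8 * ρ * exp (ρ * y))) (-(8 * ρ * (exp (ρ * y) * ρ))) y :=
    (he.const_mul (8 * ρ)).neg
  have hsq : HasDerivAt (fun y => (1 + exp (ρ * y)) ^ 2)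
      (2 * (1 + exp (ρ * y)) ^ 1 * (exp (ρ * y) * ρ)) y :=
    (he.const_add 1).pow 2
  refine (hnum.div hsq hden).congr_deriv ?_
  field_simp
  ring

lemma abs_deriv_logField_le (y : ℝ) :
    |8 * ρ ^ 2 * exp (ρ * y) * (exp (ρ * y) - 1) / (1 + exp (ρ * y)) ^ 3| ≤ 2 * ρ ^ 2 := by
  set e := exp (ρ * y)
  have he : 0 < e := exp_pos _
  have h3 : 0 < (1 + e) ^ 3 := by positivity
  rw [abs_div, abs_of_pos h3, div_le_iff₀ h3, abs_le]
  constructor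
  · nlinarith [mul_nonneg (sq_nonneg ρ) (sq_nonneg (e - 1 / 14)),
      mul_nonneg (sq_nonneg ρ) (pow_pos he 3).le, sq_nonneg ρ, mul_nonneg (sq_nonneg ρ) he.le]
  · nlinarith [mul_nonneg (mul_nonneg (sq_nonneg ρ) he.le) (sq_nonneg (e - 1 / 2)),
      mul_nonneg (sq_nonneg ρ) he.le, sq_nonneg ρ]

lemma lipschitzWith_logField : LipschitzWith ⟨2 * ρ ^ 2, by positivity⟩ (logField ρ) := by
  refine lipschitzWith_of_nnnorm_deriv_le (fun y => (hasDerivAt_logField ρ y).differentiableAt)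
    fun y => ?_
  refine NNReal.coe_le_coe.mp ?_
  rw [coe_nnnorm, Real.norm_eq_abs, (hasDerivAt_logField ρ y).deriv]
  exact abs_deriv_logField_le ρ y

lemma logField_log {s : ℝ} (hs : 0 < s) : logField ρ (log s) = -2 * (A ρ s + B ρ s) := by
  rw [logField, mul_comm ρ, ← Real.rpow_def_of_pos hs, A_add_B hs]
  ring

end LogField

lemma eq_mul_exp_integral_of_hasDerivAt {h c : ℝ → ℝ} (hpos : ∀ t, 0 < h t)
    (hd : ∀ t, HasDerivAt h (c t * h t) t) (hc : Continuous c) (r : ℝ) :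
    h r = h 0 * exp (∫ t in (0 : ℝ)..r, c t) := by
  have hlog : ∀ t, HasDerivAt (fun t => log (h t)) (c t) t := fun t => by
    simpa [(hpos t).ne'] using (hd t).log (hpos t).ne'
  rw [intervalIntegral.integral_eq_sub_of_hasDerivAt (fun t _ => hlog t)
    (hc.intervalIntegrable 0 r), exp_sub, exp_log (hpos r), exp_log (hpos 0)]
  field_simp [(hpos 0).ne']

end BrownianBoost

open BrownianBoost

section Solution

variable {ρ x : ℝ} {S : ℝ → ℝ}

lemma IsSsol.hasDerivAt (hS : IsSsol ρ x S) (u : ℝ) :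
    HasDerivAt S (-2 * (A ρ (S u) + B ρ (S u)) * S u) u := by
  rw [← ssol_rhs_eq (hS.1 u)]
  exact hS.2.2 u

lemma IsSsol.continuous (hS : IsSsol ρ x S) : Continuous S :=
  continuous_iff_continuousAt.2 fun u => (hS.2.2 u).continuousAt

lemma IsSsol.continuous_A (hS : IsSsol ρ x S) : Continuous fun u => A ρ (S u) :=
  continuousOn_A.comp_continuous hS.continuous hS.1

lemma IsSsol.continuous_B (hS : IsSsol ρ x S) : Continuous fun u => B ρ (S u) :=
  continuousOn_B.comp_continuous hS.continuous hS.1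

lemma IsSsol.hasDerivAt_log (hS : IsSsol ρ x S) (u : ℝ) :
    HasDerivAt (fun u => log (S u)) (logField ρ (log (S u))) u := by
  have h := (hS.hasDerivAt u).log (hS.1 u).ne'
  rwa [mul_div_assoc, div_self (hS.1 u).ne', mul_one, ← logField_log ρ (hS.1 u)] at h

lemma IsSsol.eq {T : ℝ → ℝ} (hS : IsSsol ρ x S) (hT : IsSsol ρ x T) : S = T := by
  have hlog : (fun u => log (S u)) = fun u => log (T u) :=
    ODE_solution_unique_univ (v := fun _ => logField ρ) (s := fun _ => univ) (t₀ := 0)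
      (fun _ => (lipschitzWith_logField ρ).lipschitzOnWith)
      (fun u => ⟨hS.hasDerivAt_log u, mem_univ _⟩) (fun u => ⟨hT.hasDerivAt_log u, mem_univ _⟩)
      (by simp only [hS.2.1, hT.2.1])
  funext u
  rw [← exp_log (hS.1 u), ← exp_log (hT.1 u)]
  exact congrArg exp (congrFun hlog u)

lemma fRho_eq (ρ : ℝ) (S : ℝ → ℝ) (r : ℝ) :
    fRho ρ S r = exp (2 * ∫ u in (0 : ℝ)..r, A ρ (S u)) := rfl

lemma gRho_eq (ρ x : ℝ) (S : ℝ → ℝ) (r : ℝ) :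
    gRho ρ x S r = x * exp (-2 * ∫ u in (0 : ℝ)..r, B ρ (S u)) := rfl

lemma fRho_zero : fRho ρ S 0 = 1 := by
  simp [fRho]

lemma hasDerivAt_fRho (hS : IsSsol ρ x S) (r : ℝ) :
    HasDerivAt (fRho ρ S) (2 * A ρ (S r) * fRho ρ S r) r := by
  have h := ((hS.continuous_A.integral_hasStrictDerivAt 0 r).hasDerivAt.const_mul 2).exp
  exact h.congr_deriv (mul_comm _ _)

lemma hasDerivAt_gRho (hS : IsSsol ρ x S) (r : ℝ) :
    HasDerivAt (gRho ρ x S) (-2 * B ρ (S r) * gRho ρ x S r) r := by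
  have h := (((hS.continuous_B.integral_hasStrictDerivAt 0 r).hasDerivAt.const_mul (-2)).exp
    ).const_mul x
  exact h.congr_deriv (by rw [gRho_eq]; ring)

lemma gRho_eq_fRho_mul (hS : IsSsol ρ x S) (r : ℝ) : gRho ρ x S r = fRho ρ S r * S r := by
  have hd : ∀ t, HasDerivAt (fun t => fRho ρ S t * S t)
      (-2 * B ρ (S t) * (fRho ρ S t * S t)) t := fun t =>
    ((hasDerivAt_fRho hS t).mul (hS.hasDerivAt t)).congr_deriv (by ring)
  have h : fRho ρ S r * S r = fRho ρ S 0 * S 0 * exp (∫ t in (0 : ℝ)..r, -2 * B ρ (S t)) :=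
    eq_mul_exp_integral_of_hasDerivAt (fun t => mul_pos (exp_pos _) (hS.1 t)) hd
      (continuous_const.mul hS.continuous_B) r
  rw [h, fRho_zero, hS.2.1, one_mul, intervalIntegral.integral_const_mul, gRho_eq]

lemma isBBpair_fRho_gRho (hS : IsSsol ρ x S) : IsBBpair ρ (fRho ρ S) (gRho ρ x S) := by
  have hf : ∀ r, 0 < fRho ρ S r := fun r => exp_pos _
  have hS_eq : ∀ r, gRho ρ x S r / fRho ρ S r = S r := fun r => by
    rw [gRho_eq_fRho_mul hS, mul_div_cancel_left₀ _ (hf r).ne']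
  refine (isBBpair_iff hf (fun r => ?_) (fun r => (hasDerivAt_fRho hS r).differentiableAt)
    (fun r => (hasDerivAt_gRho hS r).differentiableAt)).2 fun u => ?_
  · rw [gRho_eq_fRho_mul hS]
    exact mul_pos (hf r) (hS.1 r)
  · rw [hS_eq, (hasDerivAt_fRho hS u).deriv, (hasDerivAt_gRho hS u).deriv]
    exact ⟨rfl, rfl⟩

end Solution

section Converse

variable {ρ : ℝ} {f g S : ℝ → ℝ}

lemma IsBBpair.deriv_eq (h : IsBBpair ρ f g) (u : ℝ) :
    deriv f u = 2 * A ρ (g u / f u) * f u ∧ deriv g u = -2 * B ρ (g u / f u) * g u :=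
  (isBBpair_iff h.2.2.1 h.2.2.2.1 h.1 h.2.1).1 h u

lemma IsBBpair.isSsol_div (h : IsBBpair ρ f g) (hf0 : f 0 = 1) :
    IsSsol ρ (g 0) (fun u => g u / f u) := by
  have hpos u : 0 < g u / f u := div_pos (h.2.2.2.1 u) (h.2.2.1 u)
  refine ⟨hpos, by simp only [hf0, div_one], fun u => ?_⟩
  obtain ⟨hf', hg'⟩ := h.deriv_eq u
  rw [ssol_rhs_eq (hpos u)]
  refine ((h.2.1 u).hasDerivAt.div (h.1 u).hasDerivAt (h.2.2.1 u).ne').congr_deriv ?_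
  rw [hf', hg']
  field_simp
  ring

lemma IsBBpair.eq_fRho (h : IsBBpair ρ f g) (hf0 : f 0 = 1) (hS : IsSsol ρ (g 0) S) (r : ℝ) :
    f r = fRho ρ S r := by
  have hSfg : S = fun u => g u / f u := hS.eq (h.isSsol_div hf0)
  have hd : ∀ t, HasDerivAt f (2 * A ρ (S t) * f t) t := fun t => by
    rw [hSfg, ← (h.deriv_eq t).1]
    exact (h.1 t).hasDerivAt
  rw [eq_mul_exp_integral_of_hasDerivAt h.2.2.1 hd (continuous_const.mul hS.continuous_A) r,
    hf0, one_mul, intervalIntegral.integral_const_mul, fRho_eq]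

lemma IsBBpair.eq_gRho (h : IsBBpair ρ f g) (hf0 : f 0 = 1) (hS : IsSsol ρ (g 0) S) (r : ℝ) :
    g r = gRho ρ (g 0) S r := by
  have hSfg : S = fun u => g u / f u := hS.eq (h.isSsol_div hf0)
  have hd : ∀ t, HasDerivAt g (-2 * B ρ (S t) * g t) t := fun t => by
    rw [hSfg, ← (h.deriv_eq t).2]
    exact (h.2.1 t).hasDerivAt
  rw [eq_mul_exp_integral_of_hasDerivAt h.2.2.2.1 hd (continuous_const.mul hS.continuous_B) r,
    intervalIntegral.integral_const_mul, gRho_eq]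

end Converse

theorem stmt0 (ρ : ℝ) :
    (∀ x : ℝ, 0 < x → ∀ S : ℝ → ℝ, IsSsol ρ x S →
      IsBBpair ρ (fRho ρ S) (gRho ρ x S) ∧ fRho ρ S 0 = 1 ∧ 0 < gRho ρ x S 0 ∧
        ∀ r : ℝ, gRho ρ x S r = fRho ρ S r * S r) ∧
    (∀ f g : ℝ → ℝ, IsBBpair ρ f g → f 0 = 1 →
      ∀ S : ℝ → ℝ, IsSsol ρ (g 0) S →
        ∀ r : ℝ, f r = fRho ρ S r ∧ g r = gRho ρ (g 0) S r) :=
  ⟨fun _ _ _ hS => ⟨isBBpair_fRho_gRho hS, fRho_zero, (isBBpair_fRho_gRho hS).2.2.2.1 0,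
      gRho_eq_fRho_mul hS⟩,
    fun _ _ h hf0 _ hS r => ⟨h.eq_fRho hf0 hS r, h.eq_gRho hf0 hS r⟩⟩
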